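/- Let φ : ℝ^{n-1} → ℝ be γ-Hölder continuous with constant C > 0 for some γ ∈ (0,1), with φ(0) = 0, and let Ω = {x ∈ ℝⁿ : xₙ > φ(x')}. Then for all sufficiently small ε > 0, dist(ε·eₙ, ∂Ω) ≥ c·ε^{1/γ} for some constant c > 0 depending only on C and γ, and dist(ε·eₙ, ∂Ω) ≤ ε. -/

import Mathlib

open Set Metric

/-- The projection of `x ∈ ℝ^{n+1}` onto its first `n` coordinates. -/
noncomputable def frontCoords {n : ℕ} (x : EuclideanSpace ℝ (Fin (n + 1))) :
    EuclideanSpace ℝ (Fin n) :=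
  WithLp.toLp 2 (fun i : Fin n => x i.castSucc)

/-!
A boundary point `y = (y', φ y')` satisfies `|y_{n+1}| ≤ C ‖y'‖ ^ γ` since `φ 0 = 0`. Either
`‖y'‖ ≥ (ε / 2C) ^ (1 / γ)`, or `y_{n+1} < ε / 2` and `y` is at vertical distance at least `ε / 2`
from `ε e_{n+1}`; for `ε ≤ 1` both bounds are of order `ε ^ (1 / γ)`. The frontier is contained
in the graph because `φ` is continuous, and contains the origin, which gives the upper bound `ε`.
-/

open Filter Topology

lemma continuous_of_abs_sub_le_mul_dist_rpow {X : Type*} [PseudoMetricSpace X] {f : X → ℝ}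
    {C γ : ℝ} (hγ : 0 < γ) (hf : ∀ x y, |f x - f y| ≤ C * dist x y ^ γ) : Continuous f := by
  refine continuous_iff_continuousAt.2 fun y => tendsto_iff_dist_tendsto_zero.2 ?_
  have hbound : Tendsto (fun x => C * dist x y ^ γ) (𝓝 y) (𝓝 0) := by
    have hcont : Continuous fun x => C * dist x y ^ γ :=
      ((continuous_id.dist continuous_const).rpow_const fun _ => Or.inr hγ.le).const_mul C
    simpa [Real.zero_rpow hγ.ne'] using hcont.tendsto y
  exact squeeze_zero (fun _ => dist_nonneg) (fun x => hf x y) hbound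

lemma min_le_max_of_abs_le_mul_rpow {C γ ε a b : ℝ} (hC : 0 < C) (hγ : 0 < γ) (hε : 0 < ε)
    (ha : 0 ≤ a) (hb : |b| ≤ C * a ^ γ) :
    min ((ε / (2 * C)) ^ (1 / γ)) (ε / 2) ≤ max a |ε - b| := by
  set r := (ε / (2 * C)) ^ (1 / γ)
  rcases le_or_gt r a with hra | har
  · exact (min_le_left _ _).trans (hra.trans (le_max_left _ _))
  · have hrγ : r ^ γ = ε / (2 * C) := by
      rw [← Real.rpow_mul (by positivity), one_div, inv_mul_cancel₀ hγ.ne', Real.rpow_one]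
    have hb_lt : b < ε / 2 :=
      calc b ≤ C * a ^ γ := (le_abs_self b).trans hb
        _ < C * r ^ γ := by gcongr
        _ = ε / 2 := by rw [hrγ]; field_simp
    calc min r (ε / 2) ≤ ε / 2 := min_le_right _ _
      _ ≤ |ε - b| := by rw [abs_of_pos (by linarith)]; linarith
      _ ≤ max a |ε - b| := le_max_right _ _

section frontCoords

variable {n : ℕ}

lemma continuous_frontCoords : Continuous (frontCoords (n := n)) :=
  (PiLp.continuous_toLp 2 _).comp <| continuous_pi fun i =>
    (EuclideanSpace.proj (𝕜 := ℝ) i.castSucc).continuous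

@[simp]
lemma frontCoords_apply (x : EuclideanSpace ℝ (Fin (n + 1))) (i : Fin n) :
    frontCoords x i = x i.castSucc :=
  rfl

@[simp]
lemma frontCoords_sub (x y : EuclideanSpace ℝ (Fin (n + 1))) :
    frontCoords (x - y) = frontCoords x - frontCoords y :=
  rfl

@[simp]
lemma frontCoords_smul_single_last (t : ℝ) :
    frontCoords (t • EuclideanSpace.single (Fin.last n) (1 : ℝ)) = 0 := by
  ext i
  simp [(Fin.castSucc_lt_last i).ne]

@[simp]
lemma frontCoords_zero : frontCoords (0 : EuclideanSpace ℝ (Fin (n + 1))) = 0 := by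
  simpa using frontCoords_smul_single_last (n := n) 0

lemma norm_sq_eq_norm_frontCoords_sq_add (x : EuclideanSpace ℝ (Fin (n + 1))) :
    ‖x‖ ^ 2 = ‖frontCoords x‖ ^ 2 + x (Fin.last n) ^ 2 := by
  simp only [EuclideanSpace.norm_sq_eq, Real.norm_eq_abs, sq_abs, frontCoords_apply,
    Fin.sum_univ_castSucc]

lemma norm_frontCoords_le (x : EuclideanSpace ℝ (Fin (n + 1))) : ‖frontCoords x‖ ≤ ‖x‖ :=
  (pow_le_pow_iff_left₀ (norm_nonneg _) (norm_nonneg _) two_ne_zero).1 <| by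
    rw [norm_sq_eq_norm_frontCoords_sq_add x]
    exact le_add_of_nonneg_right (sq_nonneg _)

lemma frontier_supergraph_subset_graph {φ : EuclideanSpace ℝ (Fin n) → ℝ} (hφ : Continuous φ) :
    frontier {x : EuclideanSpace ℝ (Fin (n + 1)) | φ (frontCoords x) < x (Fin.last n)} ⊆
      {x | φ (frontCoords x) = x (Fin.last n)} :=
  frontier_lt_subset_eq (hφ.comp continuous_frontCoords)
    (EuclideanSpace.proj (𝕜 := ℝ) _).continuous

lemma zero_mem_frontier_supergraph {φ : EuclideanSpace ℝ (Fin n) → ℝ} (hφ0 : φ 0 = 0) :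
    0 ∈ frontier {x : EuclideanSpace ℝ (Fin (n + 1)) | φ (frontCoords x) < x (Fin.last n)} := by
  set e := EuclideanSpace.single (Fin.last n) (1 : ℝ)
  have hlim : Tendsto (fun t : ℝ => t • e) (𝓝[>] 0) (𝓝 0) := by
    refine Tendsto.mono_left ?_ nhdsWithin_le_nhds
    exact Continuous.tendsto' (by fun_prop) 0 0 (zero_smul ℝ e)
  refine ⟨mem_closure_of_tendsto hlim ?_, fun h0 => ?_⟩
  · filter_upwards [self_mem_nhdsWithin] with t (ht : 0 < t)
    simpa [e, hφ0] using ht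
  · simpa [hφ0] using interior_subset h0

lemma min_le_dist_smul_single_last_of_mem_graph {φ : EuclideanSpace ℝ (Fin n) → ℝ} {C γ ε : ℝ}
    (hC : 0 < C) (hγ : 0 < γ) (hε : 0 < ε) (hφ : ∀ x, |φ x| ≤ C * ‖x‖ ^ γ)
    {y : EuclideanSpace ℝ (Fin (n + 1))} (hy : φ (frontCoords y) = y (Fin.last n)) :
    min ((ε / (2 * C)) ^ (1 / γ)) (ε / 2) ≤
      dist (ε • EuclideanSpace.single (Fin.last n) (1 : ℝ)) y := by
  set p := ε • EuclideanSpace.single (Fin.last n) (1 : ℝ)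
  refine (min_le_max_of_abs_le_mul_rpow hC hγ hε (norm_nonneg _) (hy ▸ hφ _)).trans ?_
  rw [dist_eq_norm]
  refine max_le ?_ ?_
  · simpa [p] using norm_frontCoords_le (p - y)
  · simpa [p] using PiLp.norm_apply_le (p - y) (Fin.last n)

end frontCoords

/-- If `φ : ℝⁿ → ℝ` is `γ`-Hölder with constant `C > 0`, `γ ∈ (0,1)`, `φ(0) = 0`, and `Ω` is
the region above its graph, then for all sufficiently small `ε > 0` one has
`dist(ε • e_{n+1}, ∂Ω) ≥ c • ε^{1/γ}` for a constant `c > 0` depending only on `C` and `γ`,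
and `dist(ε • e_{n+1}, ∂Ω) ≤ ε`. -/
theorem dist_to_holder_boundary {n : ℕ} (C γ : ℝ) (hC : 0 < C) (hγ : γ ∈ Ioo (0 : ℝ) 1)
    (φ : EuclideanSpace ℝ (Fin n) → ℝ)
    (hφ : ∀ x y, |φ x - φ y| ≤ C * ‖x - y‖ ^ γ) (hφ0 : φ 0 = 0)
    (Ω : Set (EuclideanSpace ℝ (Fin (n + 1))))
    (hΩ : Ω = {x | φ (frontCoords x) < x (Fin.last n)}) :
    ∃ c > (0 : ℝ), ∃ ε₀ > (0 : ℝ), ∀ ε : ℝ, 0 < ε → ε < ε₀ →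
      c * ε ^ (1 / γ) ≤
          infDist (ε • EuclideanSpace.single (Fin.last n) (1 : ℝ)) (frontier Ω) ∧
        infDist (ε • EuclideanSpace.single (Fin.last n) (1 : ℝ)) (frontier Ω) ≤ ε := by
  obtain ⟨hγ0, hγ1⟩ := hγ
  have hφc : Continuous φ :=
    continuous_of_abs_sub_le_mul_dist_rpow hγ0 fun x y => by simpa [dist_eq_norm] using hφ x y
  have hφ_origin (x : EuclideanSpace ℝ (Fin n)) : |φ x| ≤ C * ‖x‖ ^ γ := by
    simpa [hφ0] using hφ x 0
  have h0 : (0 : EuclideanSpace ℝ (Fin (n + 1))) ∈ frontier Ω :=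
    hΩ ▸ zero_mem_frontier_supergraph hφ0
  refine ⟨min ((1 / (2 * C)) ^ (1 / γ)) (1 / 2), by positivity, 1, one_pos,
    fun ε hε hε1 => ⟨(le_infDist ⟨0, h0⟩).2 fun y hy => ?_, ?_⟩⟩
  · have hεγ : ε ^ (1 / γ) ≤ ε := by
      simpa using Real.rpow_le_rpow_of_exponent_ge hε hε1.le (one_le_one_div hγ0 hγ1.le)
    calc min ((1 / (2 * C)) ^ (1 / γ)) (1 / 2) * ε ^ (1 / γ)
        ≤ min ((ε / (2 * C)) ^ (1 / γ)) (ε / 2) := by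
          rw [min_mul_of_nonneg _ _ (by positivity), ← Real.mul_rpow (by positivity) hε.le]
          refine min_le_min (by rw [one_div_mul_eq_div]) (by linarith)
      _ ≤ _ := min_le_dist_smul_single_last_of_mem_graph hC hγ0 hε hφ_origin
          (frontier_supergraph_subset_graph hφc (hΩ ▸ hy))
  · calc infDist _ (frontier Ω) ≤ dist (ε • EuclideanSpace.single (Fin.last n) (1 : ℝ)) 0 :=
          infDist_le_dist_of_mem h0
      _ = ε := by simp [norm_smul, hε.le]
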